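/- arXiv:2506.00638 — 3 statements merged into one kernel-verified Lean document; each statement's English description precedes it below -/
import Mathlib

section
/- Let F : X → ℝʳ ∪ {+∞} and x̄ ∈ dom F, ε ∈ ℝʳ. If there exist λ ∈ ℝʳ₊ \ {0} and a continuous linear A : X → ℝʳ such that the scalar functional λ∘A belongs to the Fenchel ⟨λ,ε⟩-subdifferential of λ∘F at x̄, then A ∈ ∂^w_ε F(x̄). Moreover, if F is ℝʳ₊-convex, then conversely every A ∈ ∂^w_ε F(x̄) arises this way for some λ ∈ ℝʳ₊ \ {0}. -/
/-!
Write `g x = F x - F xb - A (x - xb) + ε` on `dom F`. If `λ ≥ 0`, `λ ≠ 0` makes `⟨λ, g⟩ ≥ 0`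
on `dom F`, no `x` can make `g x` componentwise negative, which is `A ∈ ∂^w_ε F(xb)`.
Conversely, `ℝʳ₊`-convexity of `F` makes the upper closure of `g (dom F)` convex, and
`A ∈ ∂^w_ε F(xb)` says that it misses the open negative orthant; a Hahn–Banach separation of
the two sets gives the weights `λ`.
-/

open scoped Classical

variable {X : Type*} [AddCommGroup X] [Module ℝ X] [TopologicalSpace X] {r : ℕ}

/-- The Fenchel δ-subdifferential of a scalar extended-real-valued function. -/
def fenchelSub (g : X → WithTop ℝ) (δ : ℝ) (xb : X) : Set (X →L[ℝ] ℝ) :=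
  {p | ∀ x, g xb + ((p (x - xb) - δ : ℝ) : WithTop ℝ) ≤ g x}

/-- Weak ε-subdifferential of a vector map `F` at `xb ∈ dom F`. -/
def wSub (F : X → Fin r → WithTop ℝ) (δ : Fin r → ℝ) (xb : X) :
    Set (X →L[ℝ] (Fin r → ℝ)) :=
  {A | (∀ i, F xb i ≠ ⊤) ∧
    ¬ ∃ x, ∀ i, F x i < F xb i + (((A (x - xb)) i - δ i : ℝ) : WithTop ℝ)}

/-- The scalarization `λ∘F : x ↦ ⟨λ, F x⟩` on `dom F`, `+∞` elsewhere. -/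
noncomputable def scal (lam : Fin r → ℝ) (F : X → Fin r → WithTop ℝ) : X → WithTop ℝ :=
  fun x => if ∀ i, F x i ≠ ⊤ then ((∑ i, lam i * WithTop.untopD 0 (F x i) : ℝ) : WithTop ℝ) else ⊤

/-- The scalarized linear functional `λ∘A`. -/
noncomputable def scalL (lam : Fin r → ℝ) (A : X →L[ℝ] (Fin r → ℝ)) : X →L[ℝ] ℝ :=
  (∑ i : Fin r, lam i • ContinuousLinearMap.proj i).comp A

/-- `F` is `ℝʳ₊`-convex (with the conventions `α·(+∞) = +∞` for `α > 0`, `0·(+∞) = 0`). -/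
def RPlusConvex (F : X → Fin r → WithTop ℝ) : Prop :=
  ∀ a b : ℝ, 0 ≤ a → 0 ≤ b → a + b = 1 → ∀ x x' : X, ∀ i,
    F (a • x + b • x') i ≤ (a : WithTop ℝ) * F x i + (b : WithTop ℝ) * F x' i


open Finset Set

lemma WithTop.coe_untopD_of_ne_top {α : Type*} {a : WithTop α} (d : α) (ha : a ≠ ⊤) :
    ((a.untopD d : α) : WithTop α) = a := by
  lift a to α using ha
  rfl

lemma WithTop.lt_add_coe_iff {α : Type*} [Add α] [Preorder α] {a b : WithTop α} (c d : α)
    (hb : b ≠ ⊤) : a < b + c ↔ a ≠ ⊤ ∧ a.untopD d < b.untopD d + c := by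
  lift b to α using hb
  cases a <;> simp [← WithTop.coe_add]

lemma nonpos_of_forall_pos_mul_lt {c u : ℝ} (h : ∀ t > 0, t * c < u) : c ≤ 0 := by
  by_contra! hc
  have := h ((|u| + 1) / c) (by positivity)
  rw [div_mul_cancel₀ _ hc.ne'] at this
  linarith [le_abs_self u]

lemma sum_mul_neg_of_forall_neg {ι : Type*} [Fintype ι] {lam z : ι → ℝ}
    (hlam : 0 ≤ lam) (hlam₀ : lam ≠ 0) (hz : ∀ i, z i < 0) : ∑ i, lam i * z i < 0 := by
  obtain ⟨i₀, hi₀⟩ := Function.ne_iff.mp hlam₀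
  have hpos : 0 < lam i₀ := (hlam i₀).lt_of_ne' hi₀
  calc ∑ i, lam i * z i < ∑ _i : ι, (0 : ℝ) :=
        sum_lt_sum (fun i _ => mul_nonpos_of_nonneg_of_nonpos (hlam i) (hz i).le)
          ⟨i₀, mem_univ _, mul_neg_of_pos_of_neg hpos (hz i₀)⟩
    _ = 0 := sum_const_zero

lemma ContinuousLinearMap.apply_eq_sum_single_mul {ι : Type*} [Fintype ι]
    (f : (ι → ℝ) →L[ℝ] ℝ) (z : ι → ℝ) : f z = ∑ i, f (Pi.single i 1) * z i := by
  conv_lhs => rw [← univ_sum_single z]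
  rw [map_sum]
  refine sum_congr rfl fun i _ => ?_
  rw [mul_comm, ← smul_eq_mul, ← map_smul, ← Pi.single_smul, smul_eq_mul, mul_one]

theorem exists_nonneg_weights_of_forall_exists_nonneg {ι : Type*} [Fintype ι]
    {S : Set (ι → ℝ)} (hS : Convex ℝ S) (hSne : S.Nonempty) (hmiss : ∀ z ∈ S, ∃ i, 0 ≤ z i) :
    ∃ lam : ι → ℝ, (0 ≤ lam ∧ lam ≠ 0) ∧ ∀ z ∈ S, 0 ≤ ∑ i, lam i * z i := by
  set s : Set (ι → ℝ) := univ.pi fun _ => Iio 0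
  have hs_open : IsOpen s := isOpen_set_pi finite_univ fun _ _ => isOpen_Iio
  have hs_conv : Convex ℝ s := convex_pi fun _ _ => convex_Iio 0
  have hdisj : Disjoint s S := Set.disjoint_left.2 fun w hw hwS => by
    obtain ⟨i, hi⟩ := hmiss w hwS
    exact hi.not_gt (hw i (mem_univ i))
  obtain ⟨f, u, hfs, hfS⟩ := geometric_hahn_banach_open hs_conv hs_open hS hdisj
  -- `s` is a cone, so the bound `f < u` on it forces `f ≤ 0` there.
  have hf_nonpos : ∀ w ∈ s, f w ≤ 0 := fun w hw => nonpos_of_forall_pos_mul_lt fun t ht => by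
    simpa using hfs (t • w) fun i _ => by simpa using mul_neg_of_pos_of_neg ht (hw i trivial)
  have hclosure : ∀ c, (∀ w ∈ s, f w ≤ c) → ∀ w : ι → ℝ, w ≤ 0 → f w ≤ c := by
    intro c hc w hw
    have hw_mem : w ∈ closure s := by
      rw [closure_pi_set, closure_Iio]
      exact fun i _ => hw i
    exact closure_minimal hc (isClosed_le f.continuous continuous_const) hw_mem
  have hu : 0 ≤ u := by simpa using hclosure u (fun w hw => (hfs w hw).le) 0 le_rfl
  refine ⟨fun i => f (Pi.single i 1), ⟨fun i => ?_, fun hzero => ?_⟩, fun z hz => ?_⟩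
  · have := hclosure 0 hf_nonpos (-Pi.single i 1) (neg_nonpos.2 (Pi.single_nonneg.2 zero_le_one))
    simpa using this
  · obtain ⟨z, hz⟩ := hSne
    have hf_zero : ∀ y, f y = 0 := fun y => by
      simp [f.apply_eq_sum_single_mul y, funext_iff.mp hzero]
    have := (hfs (fun _ => -1) fun i _ => by norm_num).trans_le (hfS z hz)
    simp [hf_zero] at this
  · simpa [f.apply_eq_sum_single_mul z] using hu.trans (hfS z hz)

lemma scalL_apply (lam : Fin r → ℝ) (A : X →L[ℝ] (Fin r → ℝ)) (y : X) :
    scalL lam A y = ∑ i, lam i * A y i := by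
  simp [scalL]

/-- Meaningful only for `x, xb ∈ dom F`, since `untopD 0` sends `+∞` to `0`. -/
noncomputable def subgradSlack (F : X → Fin r → WithTop ℝ) (A : X →L[ℝ] (Fin r → ℝ))
    (ε : Fin r → ℝ) (xb x : X) : Fin r → ℝ :=
  fun i => (F x i).untopD 0 - (F xb i).untopD 0 - A (x - xb) i + ε i

variable {F : X → Fin r → WithTop ℝ} {A : X →L[ℝ] (Fin r → ℝ)} {ε : Fin r → ℝ} {xb : X}

lemma mem_wSub_iff (hxb : ∀ i, F xb i ≠ ⊤) :
    A ∈ wSub F ε xb ↔ ∀ x, (∀ i, F x i ≠ ⊤) → ∃ i, 0 ≤ subgradSlack F A ε xb x i := by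
  simp only [wSub, hxb, ne_eq, not_false_eq_true, implies_true, true_and, not_exists,
    WithTop.lt_add_coe_iff _ 0 (hxb _), subgradSlack, forall_and, not_and, not_forall, not_lt]
  refine forall_congr' fun x => imp_congr_right fun _ => exists_congr fun i => ?_
  constructor <;> intro h <;> linarith

lemma mem_fenchelSub_scal_iff (lam : Fin r → ℝ) (hxb : ∀ i, F xb i ≠ ⊤) :
    scalL lam A ∈ fenchelSub (scal lam F) (∑ i, lam i * ε i) xb ↔
      ∀ x, (∀ i, F x i ≠ ⊤) → 0 ≤ ∑ i, lam i * subgradSlack F A ε xb x i := by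
  refine forall_congr' fun x => ?_
  by_cases hx : ∀ i, F x i ≠ ⊤
  · rw [imp_iff_right hx]
    unfold scal
    rw [if_pos hx, if_pos hxb, ← WithTop.coe_add, WithTop.coe_le_coe, scalL_apply]
    simp only [subgradSlack, mul_add, mul_sub, sum_add_distrib, sum_sub_distrib]
    constructor <;> intro h <;> linarith
  · simp [scal, hx]

lemma subgradSlack_convexCombo_le (hconv : RPlusConvex F) {x x' : X}
    (hx : ∀ i, F x i ≠ ⊤) (hx' : ∀ i, F x' i ≠ ⊤) {a b : ℝ} (ha : 0 ≤ a) (hb : 0 ≤ b)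
    (hab : a + b = 1) :
    (∀ i, F (a • x + b • x') i ≠ ⊤) ∧
      subgradSlack F A ε xb (a • x + b • x') ≤
        a • subgradSlack F A ε xb x + b • subgradSlack F A ε xb x' := by
  have hle : ∀ i, F (a • x + b • x') i ≤
      ((a * (F x i).untopD 0 + b * (F x' i).untopD 0 : ℝ) : WithTop ℝ) := fun i => by
    simpa only [WithTop.coe_add, WithTop.coe_mul, WithTop.coe_untopD_of_ne_top _ (hx i),
      WithTop.coe_untopD_of_ne_top _ (hx' i)] using hconv a b ha hb hab x x' i
  have hfin : ∀ i, F (a • x + b • x') i ≠ ⊤ :=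
    fun i => ne_top_of_le_ne_top WithTop.coe_ne_top (hle i)
  refine ⟨hfin, fun i => ?_⟩
  have hFi := hle i
  rw [← WithTop.coe_untopD_of_ne_top 0 (hfin i), WithTop.coe_le_coe] at hFi
  have hAi : A (a • x + b • x' - xb) i = a * A (x - xb) i + b * A (x' - xb) i := by
    rw [show a • x + b • x' - xb = a • (x - xb) + b • (x' - xb) by
      rw [smul_sub, smul_sub, sub_add_sub_comm, ← add_smul, hab, one_smul]]
    simp
  simp only [subgradSlack, Pi.add_apply, Pi.smul_apply, smul_eq_mul, hAi]
  linear_combination hFi + ((F xb i).untopD 0 - ε i) * hab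

lemma convex_upperClosure_subgradSlack (hconv : RPlusConvex F) :
    Convex ℝ (upperClosure (subgradSlack F A ε xb '' {x | ∀ i, F x i ≠ ⊤}) : Set (Fin r → ℝ)) := by
  rintro z ⟨_, ⟨x, hx, rfl⟩, hz⟩ z' ⟨_, ⟨x', hx', rfl⟩, hz'⟩ a b ha hb hab
  obtain ⟨hfin, hslack⟩ := subgradSlack_convexCombo_le (A := A) (ε := ε) (xb := xb)
    hconv hx hx' ha hb hab
  exact ⟨_, ⟨_, hfin, rfl⟩,
    hslack.trans (add_le_add (smul_le_smul_of_nonneg_left hz ha)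
      (smul_le_smul_of_nonneg_left hz' hb))⟩

/-- scalarization of the weak ε-subdifferential.  If `λ∘A` belongs to the
Fenchel `⟨λ,ε⟩`-subdifferential of `λ∘F` at `xb` for some `λ ∈ ℝʳ₊ \ {0}`, then
`A ∈ ∂^w_ε F(xb)`; and conversely when `F` is `ℝʳ₊`-convex. -/
theorem weak_subdiff_scalarization
    (F : X → Fin r → WithTop ℝ) (xb : X) (hxb : ∀ i, F xb i ≠ ⊤) (ε : Fin r → ℝ) :
    (∀ A : X →L[ℝ] (Fin r → ℝ),
      (∃ lam : Fin r → ℝ, (0 ≤ lam ∧ lam ≠ 0) ∧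
        scalL lam A ∈ fenchelSub (scal lam F) (∑ i, lam i * ε i) xb) →
      A ∈ wSub F ε xb) ∧
    (RPlusConvex F →
      ∀ A : X →L[ℝ] (Fin r → ℝ), A ∈ wSub F ε xb →
        ∃ lam : Fin r → ℝ, (0 ≤ lam ∧ lam ≠ 0) ∧
          scalL lam A ∈ fenchelSub (scal lam F) (∑ i, lam i * ε i) xb) := by
  refine ⟨fun A ⟨lam, ⟨hlam, hlam₀⟩, hA⟩ => ?_, fun hconv A hA => ?_⟩
  · rw [mem_fenchelSub_scal_iff lam hxb] at hA
    refine (mem_wSub_iff hxb).2 fun x hx => ?_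
    by_contra! hneg
    exact (sum_mul_neg_of_forall_neg hlam hlam₀ hneg).not_ge (hA x hx)
  · rw [mem_wSub_iff hxb] at hA
    obtain ⟨lam, hlam, hsupp⟩ := exists_nonneg_weights_of_forall_exists_nonneg
      (convex_upperClosure_subgradSlack (A := A) (ε := ε) (xb := xb) hconv)
      ⟨_, _, ⟨xb, hxb, rfl⟩, le_rfl⟩
      (by rintro z ⟨_, ⟨x, hx, rfl⟩, hz⟩
          obtain ⟨i, hi⟩ := hA x hx
          exact ⟨i, hi.trans (hz i)⟩)
    exact ⟨lam, hlam, (mem_fenchelSub_scal_iff lam hxb).2 fun x hx =>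
      hsupp _ ⟨_, ⟨x, hx, rfl⟩, le_rfl⟩⟩
end

section
/- Let f, h : X → ℝ be finite convex functions on a real vector space X and assume inf_{x ∈ X} f(x) < inf_{x : h(x) ≥ 0} f(x) (with the left infimum possibly −∞). Then for every x with h(x) > 0 there exists a point π(x) with h(π(x)) = 0 and f(π(x)) < f(x); consequently, the set of exact global minimizers of f over {h = 0} equals the set of exact global minimizers of f over {h ≥ 0}. -/
/-- Tuy's lemma: for finite convex `f, h` on a real vector space with
`inf_X f < inf_{h ≥ 0} f` (left inf possibly `-∞`, computed in `EReal`), every `x` with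
`h(x) > 0` can be projected to a point `y` with `h(y) = 0` and `f(y) < f(x)`;
consequently, `argmin_{h = 0} f = argmin_{h ≥ 0} f`. -/
theorem tuy_projection_lemma
    {X : Type*} [AddCommGroup X] [Module ℝ X]
    (f h : X → ℝ)
    (hf : ConvexOn ℝ Set.univ f) (hh : ConvexOn ℝ Set.univ h)
    (hess : (⨅ x : X, (f x : EReal)) < ⨅ x ∈ {x : X | 0 ≤ h x}, (f x : EReal)) :
    (∀ x, 0 < h x → ∃ y, h y = 0 ∧ f y < f x) ∧
    {x | h x = 0 ∧ ∀ y, h y = 0 → f x ≤ f y}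
      = {x | 0 ≤ h x ∧ ∀ y, 0 ≤ h y → f x ≤ f y} := by
  -- extract a point `x₀` strictly below the constrained infimum
  obtain ⟨x₀, hx₀⟩ : ∃ x₀ : X, (f x₀ : EReal) < ⨅ x ∈ {x : X | 0 ≤ h x}, (f x : EReal) := by
    exact iInf_lt_iff.mp hess
  have hx₀' : ∀ y, 0 ≤ h y → f x₀ < f y := by
    intro y hy
    have : (f x₀ : EReal) < (f y : EReal) :=
      lt_of_lt_of_le hx₀ (iInf₂_le y hy)
    exact_mod_cast this
  have hx₀neg : h x₀ < 0 := by
    by_contra hc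
    exact lt_irrefl _ (hx₀' x₀ (not_lt.mp hc))
  have main : ∀ x, 0 < h x → ∃ y, h y = 0 ∧ f y < f x := by
    intro x hx
    -- the convex function along the segment from `x₀` to `x`
    set L : ℝ →ᵃ[ℝ] X := AffineMap.lineMap x₀ x with hL
    have hgconv : ConvexOn ℝ Set.univ (h ∘ L) := by
      have := hh.comp_affineMap L
      simpa using this
    have hgcont : ContinuousOn (h ∘ L) (Set.Icc (0:ℝ) 1) :=
      (hgconv.continuousOn isOpen_univ).mono (Set.subset_univ _)
    have h0 : (h ∘ L) 0 = h x₀ := by simp [hL]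
    have h1 : (h ∘ L) 1 = h x := by simp [hL]
    have hiv : (0:ℝ) ∈ Set.Icc ((h ∘ L) 0) ((h ∘ L) 1) := by
      rw [h0, h1]; exact ⟨hx₀neg.le, hx.le⟩
    obtain ⟨t, ht, htz⟩ := intermediate_value_Icc zero_le_one hgcont hiv
    have ht0 : t ≠ 0 := by
      rintro rfl; rw [h0] at htz; exact hx₀neg.ne htz
    have ht1 : t ≠ 1 := by
      rintro rfl; rw [h1] at htz; exact hx.ne' htz
    have htmem : t ∈ Set.Ioo (0:ℝ) 1 :=
      ⟨lt_of_le_of_ne ht.1 (Ne.symm ht0), lt_of_le_of_ne ht.2 ht1⟩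
    refine ⟨L t, htz, ?_⟩
    have hLt : L t = (1 - t) • x₀ + t • x := by
      simp [hL, AffineMap.lineMap_apply_module]
    have hcomb := hf.2 (Set.mem_univ x₀) (Set.mem_univ x)
      (by linarith [htmem.2] : (0:ℝ) ≤ 1 - t) htmem.1.le (by ring)
    rw [← hLt] at hcomb
    have hfx₀ : f x₀ < f x := hx₀' x hx.le
    calc f (L t) ≤ (1 - t) * f x₀ + t * f x := by simpa [smul_eq_mul] using hcomb
      _ < (1 - t) * f x + t * f x := by
          have : 0 < 1 - t := by linarith [htmem.2]
          nlinarith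
      _ = f x := by ring
  refine ⟨main, ?_⟩
  ext x
  simp only [Set.mem_setOf_eq]
  constructor
  · rintro ⟨hx0, hmin⟩
    refine ⟨hx0.ge, fun y hy => ?_⟩
    rcases eq_or_lt_of_le hy with heq | hlt
    · exact hmin y heq.symm
    · obtain ⟨z, hz0, hzlt⟩ := main y hlt
      exact (hmin z hz0).trans hzlt.le
  · rintro ⟨hx0, hmin⟩
    have hx0' : h x = 0 := by
      rcases eq_or_lt_of_le hx0 with heq | hlt
      · exact heq.symm
      · obtain ⟨z, hz0, hzlt⟩ := main x hlt
        exact absurd (hmin z hz0.ge) (not_le.mpr hzlt)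
    exact ⟨hx0', fun y hy => hmin y hy.ge⟩
end

section
/- Let f, h : X → ℝ be finite convex functions with inf_{x ∈ X} f(x) < inf_{x : h(x) ≥ 0} f(x). Then for every ε ≥ 0, the set of ε-approximate minimizers of f over {x : h(x) = 0} equals the intersection of the set of ε-approximate minimizers of f over {x : h(x) ≥ 0} with the set {x : h(x) = 0}. -/
/-- for finite convex `f, h` with `inf_X f < inf_{h ≥ 0} f`, the ε-approximate
minimizers of `f` over `{h = 0}` are exactly the ε-approximate minimizers over `{h ≥ 0}`
that lie in `{h = 0}`. -/
theorem eps_argmin_eq_on_boundary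
    {X : Type*} [AddCommGroup X] [Module ℝ X]
    (f h : X → ℝ)
    (hf : ConvexOn ℝ Set.univ f) (hh : ConvexOn ℝ Set.univ h)
    (hess : (⨅ x : X, (f x : EReal)) < ⨅ x ∈ {x : X | 0 ≤ h x}, (f x : EReal))
    (ε : ℝ) (hε : 0 ≤ ε) :
    {x | h x = 0 ∧ ∀ y, h y = 0 → f x - ε ≤ f y}
      = {x | 0 ≤ h x ∧ ∀ y, 0 ≤ h y → f x - ε ≤ f y} ∩ {x | h x = 0} := by
  -- extract x₀ with (f x₀ : EReal) < inf over {h ≥ 0}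
  obtain ⟨x₀, hx₀⟩ : ∃ x₀, (f x₀ : EReal) < ⨅ x ∈ {x : X | 0 ≤ h x}, (f x : EReal) :=
    iInf_lt_iff.mp hess
  have hle : ∀ z, 0 ≤ h z → f x₀ < f z := by
    intro z hz
    have : (⨅ x ∈ {x : X | 0 ≤ h x}, (f x : EReal)) ≤ (f z : EReal) := biInf_le _ hz
    exact_mod_cast hx₀.trans_le this
  have hx₀neg : h x₀ < 0 := by
    by_contra hcon
    exact absurd (hle x₀ (not_lt.mp hcon)) (lt_irrefl _)
  -- key lemma: every point of {h ≥ 0} is dominated by a point of {h = 0}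
  have key : ∀ y, 0 ≤ h y → ∃ z, h z = 0 ∧ f z ≤ f y := by
    intro y hy
    rcases eq_or_lt_of_le hy with hy0 | hy0
    · exact ⟨y, hy0.symm, le_refl _⟩
    set L : ℝ →ᵃ[ℝ] X := AffineMap.lineMap y x₀ with hL
    have hg : ConvexOn ℝ Set.univ (h ∘ L) := by
      have := hh.comp_affineMap L
      simpa using this
    have hgc : ContinuousOn (h ∘ L) (Set.Icc (0:ℝ) 1) :=
      (hg.continuousOn isOpen_univ).mono (Set.subset_univ _)
    have h0 : (h ∘ L) 0 = h y := by simp [hL]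
    have h1 : (h ∘ L) 1 = h x₀ := by simp [hL]
    have hmem : (0:ℝ) ∈ Set.Icc ((h ∘ L) 1) ((h ∘ L) 0) := by
      rw [h0, h1]; exact ⟨hx₀neg.le, hy⟩
    obtain ⟨t, ht, htz⟩ := intermediate_value_Icc' (by norm_num : (0:ℝ) ≤ 1) hgc hmem
    refine ⟨L t, htz, ?_⟩
    have hzval : L t = (1 - t) • y + t • x₀ := by
      simp [hL, AffineMap.lineMap_apply]
      module
    -- convexity of f along the segment
    have hfz : f (L t) ≤ (1 - t) * f y + t * f x₀ := by
      rw [hzval]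
      have := hf.2 (Set.mem_univ y) (Set.mem_univ x₀)
        (by linarith [ht.2] : (0:ℝ) ≤ 1 - t) ht.1 (by ring)
      simpa using this
    have hfx₀ : f x₀ < f (L t) := hle _ htz.ge
    have ht1 : t < 1 := by
      rcases lt_or_eq_of_le ht.2 with h' | h'
      · exact h'
      · exfalso; rw [h'] at htz; rw [h1] at htz; linarith
    nlinarith [ht.1, ht1]
  ext x
  simp only [Set.mem_setOf_eq, Set.mem_inter_iff]
  constructor
  · rintro ⟨hx0, hmin⟩
    refine ⟨⟨hx0.ge, ?_⟩, hx0⟩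
    intro y hy
    obtain ⟨z, hz0, hzy⟩ := key y hy
    exact (hmin z hz0).trans hzy
  · rintro ⟨⟨-, hmin⟩, hx0⟩
    exact ⟨hx0, fun y hy => hmin y hy.ge⟩
end
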